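/- arXiv:1412.0220 — 2 statements merged into one kernel-verified Lean document; each statement's English description precedes it below -/
import Mathlib

section
/- For every probability measure ν on [0,∞), every α > 0, every natural number n and every t ≥ 0, the Kendall–Williamson transform of the n-fold Kendall convolution power of ν satisfies Φ_{ν^{△_α n}}(t) = (Φ_ν(t))^n. -/
open MeasureTheory Set

/-- The Pareto probability measure `π_{2α}` on `ℝ`, with density
`2α x^(-(2α+1)) 1_{(1,∞)}(x)` with respect to Lebesgue measure. -/
noncomputable def pareto (α : ℝ) : Measure ℝ :=
  volume.withDensity
    (fun x => ENNReal.ofReal (if 1 < x then 2 * α * x ^ (-(2 * α) - 1) else 0))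

/-- The Kendall probability kernel `ρ_{a,b} = (1 - (a/b)^α) δ_b + (a/b)^α T_b π_{2α}`
for `0 ≤ a ≤ b` (with `ρ_{0,0} = δ_0`). -/
noncomputable def kendallKernelLe (α a b : ℝ) : Measure ℝ :=
  if b = 0 then Measure.dirac 0
  else ENNReal.ofReal (1 - (a / b) ^ α) • Measure.dirac b
      + ENNReal.ofReal ((a / b) ^ α) • Measure.map (fun x => b * x) (pareto α)

/-- The Kendall kernel `ρ_{x,y}`, extended symmetrically. -/
noncomputable def kendallKernel (α x y : ℝ) : Measure ℝ :=
  kendallKernelLe α (min x y) (max x y)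

/-- The Kendall convolution `λ △_α ν`, defined by
`(λ △_α ν)(A) = ∫∫ ρ_{x,y}(A) λ(dx) ν(dy)`. -/
noncomputable def kendallConv (α : ℝ) (lam ν : Measure ℝ) : Measure ℝ :=
  lam.bind (fun x => ν.bind (fun y => kendallKernel α x y))

/-- The `n`-fold Kendall convolution power `ν^{△_α n}`, with `ν^{△_α 0} = δ_0`. -/
noncomputable def kendallPow (α : ℝ) (ν : Measure ℝ) : ℕ → Measure ℝ
  | 0 => Measure.dirac 0
  | n + 1 => kendallConv α (kendallPow α ν n) ν

/-- The Kendall–Williamson transform `Φ_ν(t) = ∫ (1 - (t s)^α)_+ ν(ds)`. -/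
noncomputable def williamson (α : ℝ) (ν : Measure ℝ) (t : ℝ) : ℝ :=
  ∫ s, max (1 - (t * s) ^ α) 0 ∂ν

/-!
Write `Ψ(u) = (1 - u^α)_+`, so that `Φ_μ(t) = ∫ Ψ(t s) μ(ds)`. The point is that `Ψ(t ·)` is
multiplicative for the Kendall kernel: `∫ Ψ(t s) ρ_{x,y}(ds) = Ψ(t x) Ψ(t y)` for `x, y ≥ 0`.
On the Pareto part this reads `∫ Ψ(c x) π_{2α}(dx) = Ψ(c)²`; mixing it with the atom at `b`, with
`p = (a/b)^α` and `q = (t b)^α`, gives `(1 - p)(1 - q)_+ + p (1 - q)_+² = (1 - p q)_+ (1 - q)_+`.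
Integrating over `x ~ λ`, `y ~ ν` then makes the transform of `λ △_α ν` the product of the
transforms, and induction on `n` finishes. Integrals are taken in `ℝ≥0∞` to avoid integrability
side conditions; nonnegativity of the measures is carried along since `(t s)^α` is junk for `s < 0`.
-/

open Filter Topology Asymptotics

theorem hasDerivAt_max_zero_sq (u : ℝ) :
    HasDerivAt (fun v : ℝ => max v 0 ^ 2) (2 * max u 0) u := by
  have hbound (h : ℝ) : |max (u + h) 0 ^ 2 - max u 0 ^ 2 - h * (2 * max u 0)| ≤ h ^ 2 := by
    rw [abs_le]
    constructor <;> rcases le_total u 0 with hu | hu <;> rcases le_total (u + h) 0 with hv | hv <;>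
      simp only [max_eq_left, max_eq_right, hu, hv] <;> nlinarith
  rw [hasDerivAt_iff_isLittleO_nhds_zero]
  refine (IsBigO.of_bound 1 (Eventually.of_forall fun h => ?_)).trans_isLittleO
    (isLittleO_pow_id (𝕜 := ℝ) one_lt_two)
  simpa [abs_pow] using hbound h

theorem lintegral_Ioi_of_hasDerivAt_of_nonneg {g g' : ℝ → ℝ} {a l : ℝ}
    (hderiv : ∀ x ∈ Ici a, HasDerivAt g (g' x) x) (g'pos : ∀ x ∈ Ioi a, 0 ≤ g' x)
    (hg : Tendsto g atTop (𝓝 l)) :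
    ∫⁻ x in Ioi a, ENNReal.ofReal (g' x) = ENNReal.ofReal (l - g a) := by
  rw [← integral_Ioi_of_hasDerivAt_of_nonneg' hderiv g'pos hg,
    ofReal_integral_eq_lintegral_ofReal (integrableOn_Ioi_deriv_of_nonneg' hderiv g'pos hg)
      ((ae_restrict_iff' measurableSet_Ioi).2 (Eventually.of_forall g'pos))]

namespace MeasureTheory.Measure

variable {X Y Z : Type*} [MeasurableSpace X] [MeasurableSpace Y] [MeasurableSpace Z]

lemma _root_.Measurable.smul_measure' {c : X → ENNReal} {μ : X → Measure Y} (hc : Measurable c)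
    (hμ : Measurable μ) : Measurable fun x => c x • μ x := by
  refine measurable_of_measurable_coe _ fun s hs => ?_
  simp only [smul_apply, smul_eq_mul]
  exact hc.mul ((measurable_coe hs).comp hμ)

lemma measurable_map_of_uncurry {g : X → Y → Z} (hg : Measurable (Function.uncurry g))
    (μ : Measure Y) [SFinite μ] : Measurable fun x => μ.map (g x) := by
  refine measurable_of_measurable_coe _ fun s hs => ?_
  have hmap : ∀ x, μ.map (g x) s = μ (Prod.mk x ⁻¹' (Function.uncurry g ⁻¹' s)) :=
    fun x => map_apply (hg.comp measurable_prodMk_left) hs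
  simp_rw [hmap]
  exact measurable_measure_prodMk_left (hg hs)

lemma measurable_bind_of_uncurry {κ : X → Y → Measure Z}
    (hκ : Measurable (Function.uncurry κ)) (ν : Measure Y) [SFinite ν] :
    Measurable fun x => ν.bind (κ x) := by
  refine measurable_of_measurable_coe _ fun s hs => ?_
  have hbind : ∀ x, ν.bind (κ x) s = ∫⁻ y, κ x y s ∂ν :=
    fun x => bind_apply hs (hκ.comp measurable_prodMk_left).aemeasurable
  simp_rw [hbind]
  exact ((measurable_coe hs).comp hκ).lintegral_prod_right'

lemma ae_bind_of_ae_ae {m : Measure X} {f : X → Measure Y} {p : Y → Prop}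
    (hf : AEMeasurable f m) (hp : MeasurableSet {y | p y}) (h : ∀ᵐ x ∂m, ∀ᵐ y ∂f x, p y) :
    ∀ᵐ y ∂m.bind f, p y := by
  rw [ae_iff, bind_apply (s := {y | ¬p y}) hp.compl hf]
  exact (lintegral_congr_ae (h.mono fun x hx => ae_iff.1 hx)).trans lintegral_zero

end MeasureTheory.Measure

noncomputable def williamsonPsi (α u : ℝ) : ℝ := max (1 - u ^ α) 0

@[fun_prop]
lemma measurable_williamsonPsi (α : ℝ) : Measurable (williamsonPsi α) := by
  unfold williamsonPsi; fun_prop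

lemma williamsonPsi_nonneg (α u : ℝ) : 0 ≤ williamsonPsi α u := le_max_right _ _

lemma williamsonPsi_zero {α : ℝ} (hα : 0 < α) : williamsonPsi α 0 = 1 := by
  simp [williamsonPsi, Real.zero_rpow hα.ne']

lemma rpow_mul_williamsonPsi {α c x : ℝ} (hc : 0 ≤ c) (hx : 0 < x) :
    x ^ (-(2 * α) - 1) * williamsonPsi α (c * x) = x ^ (-α - 1) * max (x ^ (-α) - c ^ α) 0 := by
  have hsplit : x ^ (-(2 * α) - 1) = x ^ (-α - 1) * x ^ (-α) := by
    rw [← Real.rpow_add hx]; ring_nf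
  rw [hsplit, mul_assoc, williamsonPsi, mul_max_of_nonneg _ _ (Real.rpow_nonneg hx.le _),
    Real.mul_rpow hc hx.le, Real.rpow_neg hx.le, mul_zero, mul_sub, mul_one, mul_left_comm,
    inv_mul_cancel₀ (Real.rpow_pos_of_pos hx α).ne', mul_one]

lemma one_sub_mul_max_add_mul_max_sq {p q : ℝ} (hp₀ : 0 ≤ p) (hp₁ : p ≤ 1) :
    (1 - p) * max (1 - q) 0 + p * max (1 - q) 0 ^ 2 = max (1 - p * q) 0 * max (1 - q) 0 := by
  rcases le_total q 1 with hq | hq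
  · rw [max_eq_left (by linarith), max_eq_left (by nlinarith)]
    ring
  · rw [max_eq_right (by linarith)]
    ring

lemma measurable_paretoDensity (α : ℝ) :
    Measurable fun x : ℝ => ENNReal.ofReal (if 1 < x then 2 * α * x ^ (-(2 * α) - 1) else 0) :=
  (Measurable.ite measurableSet_Ioi (by fun_prop) measurable_const).ennreal_ofReal

instance (α : ℝ) : SFinite (pareto α) := by
  unfold pareto; infer_instance

lemma ae_one_lt_pareto (α : ℝ) : ∀ᵐ x ∂pareto α, 1 < x := by
  rw [pareto, ae_withDensity_iff (measurable_paretoDensity α)]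
  refine Eventually.of_forall fun x hx => ?_
  by_contra h
  simp [h] at hx

theorem lintegral_pareto_williamsonPsi {α c : ℝ} (hα : 0 < α) (hc : 0 ≤ c) :
    ∫⁻ x, ENNReal.ofReal (williamsonPsi α (c * x)) ∂pareto α
      = ENNReal.ofReal (williamsonPsi α c) ^ 2 := by
  set d := c ^ α
  have hd : 0 ≤ d := Real.rpow_nonneg hc α
  -- the substitution `u = x ^ (-α)` turns the integrand into an exact derivative
  set g : ℝ → ℝ := fun x => -(max (x ^ (-α) - d) 0 ^ 2)
  set g' : ℝ → ℝ := fun x => 2 * α * x ^ (-α - 1) * max (x ^ (-α) - d) 0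
  have hderiv : ∀ x ∈ Ici (1 : ℝ), HasDerivAt g (g' x) x := by
    intro x hx
    have hx0 : x ≠ 0 := (zero_lt_one.trans_le hx).ne'
    exact ((hasDerivAt_max_zero_sq _).comp x
      ((Real.hasDerivAt_rpow_const (p := -α) (Or.inl hx0)).sub_const d)).neg.congr_deriv (by ring)
  have hg'_nonneg : ∀ x ∈ Ioi (1 : ℝ), 0 ≤ g' x := fun x hx => by
    have hx0 : 0 < x := zero_lt_one.trans hx
    dsimp only [g']; positivity
  have hlim : Tendsto g atTop (𝓝 0) := by
    have : Continuous fun u : ℝ => -(max (u - d) 0 ^ 2) := by fun_prop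
    convert (this.tendsto 0).comp (tendsto_rpow_neg_atTop hα) using 2
    · rfl
    · simp [hd]
  have hdens (x : ℝ) :
      ENNReal.ofReal (if 1 < x then 2 * α * x ^ (-(2 * α) - 1) else 0)
        * ENNReal.ofReal (williamsonPsi α (c * x))
      = (Ioi 1).indicator (fun x => ENNReal.ofReal (g' x)) x := by
    by_cases hx : 1 < x
    · rw [if_pos hx, indicator_of_mem (mem_Ioi.2 hx), ← ENNReal.ofReal_mul (by positivity),
        mul_assoc, rpow_mul_williamsonPsi hc (zero_lt_one.trans hx), ← mul_assoc]
    · rw [if_neg hx, indicator_of_notMem (by simpa using hx), ENNReal.ofReal_zero, zero_mul]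
  rw [pareto, lintegral_withDensity_eq_lintegral_mul _ (measurable_paretoDensity α) (by fun_prop)]
  simp only [Pi.mul_apply]
  rw [lintegral_congr hdens, lintegral_indicator measurableSet_Ioi,
    lintegral_Ioi_of_hasDerivAt_of_nonneg hderiv hg'_nonneg hlim,
    ← ENNReal.ofReal_pow (williamsonPsi_nonneg _ _)]
  simp [g, williamsonPsi, d]

lemma lintegral_kendallKernelLe_williamsonPsi {α t a b : ℝ} (hα : 0 < α) (ht : 0 ≤ t)
    (ha : 0 ≤ a) (hab : a ≤ b) :
    ∫⁻ s, ENNReal.ofReal (williamsonPsi α (t * s)) ∂kendallKernelLe α a b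
      = ENNReal.ofReal (williamsonPsi α (t * a)) * ENNReal.ofReal (williamsonPsi α (t * b)) := by
  rcases (ha.trans hab).eq_or_lt with hb | hb
  · obtain rfl : a = 0 := le_antisymm (hb ▸ hab) ha
    simp [kendallKernelLe, ← hb, williamsonPsi_zero hα]
  set p := (a / b) ^ α
  set q := (t * b) ^ α
  have hp₀ : 0 ≤ p := Real.rpow_nonneg (div_nonneg ha hb.le) α
  have hp₁ : p ≤ 1 := Real.rpow_le_one (div_nonneg ha hb.le) ((div_le_one hb).2 hab) hα.le
  have hta : (t * a) ^ α = p * q := by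
    rw [← Real.mul_rpow (div_nonneg ha hb.le) (mul_nonneg ht hb.le)]
    congr 1
    field_simp
  rw [kendallKernelLe, if_neg hb.ne', lintegral_add_measure, lintegral_smul_measure,
    lintegral_smul_measure, lintegral_dirac, lintegral_map (by fun_prop) (by fun_prop)]
  simp_rw [← mul_assoc]
  have hψ := williamsonPsi_nonneg α (t * b)
  rw [lintegral_pareto_williamsonPsi hα (mul_nonneg ht hb.le), smul_eq_mul, smul_eq_mul,
    ← ENNReal.ofReal_pow hψ, ← ENNReal.ofReal_mul (by linarith), ← ENNReal.ofReal_mul hp₀,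
    ← ENNReal.ofReal_add (mul_nonneg (by linarith) hψ) (by positivity),
    ← ENNReal.ofReal_mul (williamsonPsi_nonneg _ _)]
  simp only [williamsonPsi, hta]
  rw [one_sub_mul_max_add_mul_max_sq hp₀ hp₁]

lemma ae_nonneg_kendallKernelLe (α a : ℝ) {b : ℝ} (hb : 0 ≤ b) :
    ∀ᵐ z ∂kendallKernelLe α a b, 0 ≤ z := by
  have hmeas : MeasurableSet {z : ℝ | 0 ≤ z} := measurableSet_Ici
  unfold kendallKernelLe
  split_ifs
  · exact (ae_dirac_iff hmeas).2 le_rfl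
  refine ae_add_measure_iff.2 ⟨Measure.ae_smul_measure ((ae_dirac_iff hmeas).2 hb) _,
    Measure.ae_smul_measure ?_ _⟩
  rw [ae_map_iff (measurable_const_mul b).aemeasurable hmeas]
  exact (ae_one_lt_pareto α).mono fun x hx => mul_nonneg hb (zero_le_one.trans hx.le)

lemma measurable_kendallKernelLe (α : ℝ) : Measurable (Function.uncurry (kendallKernelLe α)) := by
  refine Measurable.ite (measurableSet_eq_fun measurable_snd measurable_const) measurable_const
    ((Measurable.smul_measure' (by fun_prop) (Measure.measurable_dirac.comp measurable_snd)).add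
      (Measurable.smul_measure' (by fun_prop) ?_))
  exact (Measure.measurable_map_of_uncurry (g := fun b x : ℝ => b * x) (by fun_prop) _).comp
    measurable_snd

lemma measurable_kendallKernel (α : ℝ) : Measurable (Function.uncurry (kendallKernel α)) :=
  (measurable_kendallKernelLe α).comp
    ((measurable_fst.min measurable_snd).prodMk (measurable_fst.max measurable_snd))

lemma lintegral_kendallKernel_williamsonPsi {α t x y : ℝ} (hα : 0 < α) (ht : 0 ≤ t)
    (hx : 0 ≤ x) (hy : 0 ≤ y) :
    ∫⁻ s, ENNReal.ofReal (williamsonPsi α (t * s)) ∂kendallKernel α x y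
      = ENNReal.ofReal (williamsonPsi α (t * x)) * ENNReal.ofReal (williamsonPsi α (t * y)) := by
  rw [kendallKernel, lintegral_kendallKernelLe_williamsonPsi hα ht (le_min hx hy) min_le_max]
  rcases le_total x y with h | h
  · rw [min_eq_left h, max_eq_right h]
  · rw [min_eq_right h, max_eq_left h, mul_comm]

lemma measurable_kendallKernel_left (α x : ℝ) : Measurable (kendallKernel α x) :=
  (measurable_kendallKernel α).comp measurable_prodMk_left

section KendallConv

variable {α : ℝ} {lam ν : Measure ℝ} [SFinite ν]

lemma ae_nonneg_kendallConv (hlam : ∀ᵐ x ∂lam, 0 ≤ x) : ∀ᵐ z ∂kendallConv α lam ν, 0 ≤ z := by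
  refine Measure.ae_bind_of_ae_ae
    (Measure.measurable_bind_of_uncurry (measurable_kendallKernel α) ν).aemeasurable
    measurableSet_Ici (hlam.mono fun x hx => ?_)
  refine Measure.ae_bind_of_ae_ae (measurable_kendallKernel_left α x).aemeasurable
    measurableSet_Ici (ae_of_all _ fun y => ?_)
  exact ae_nonneg_kendallKernelLe α _ (hx.trans (le_max_left x y))

lemma lintegral_kendallConv_williamsonPsi {t : ℝ} (hα : 0 < α) (ht : 0 ≤ t)
    (hlam : ∀ᵐ x ∂lam, 0 ≤ x) (hν : ∀ᵐ y ∂ν, 0 ≤ y) :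
    ∫⁻ s, ENNReal.ofReal (williamsonPsi α (t * s)) ∂kendallConv α lam ν
      = (∫⁻ s, ENNReal.ofReal (williamsonPsi α (t * s)) ∂lam)
        * ∫⁻ s, ENNReal.ofReal (williamsonPsi α (t * s)) ∂ν := by
  have hψ : Measurable fun s => ENNReal.ofReal (williamsonPsi α (t * s)) := by fun_prop
  have hinner : ∀ᵐ x ∂lam,
      ∫⁻ s, ENNReal.ofReal (williamsonPsi α (t * s)) ∂ν.bind (kendallKernel α x)
        = ENNReal.ofReal (williamsonPsi α (t * x))
          * ∫⁻ s, ENNReal.ofReal (williamsonPsi α (t * s)) ∂ν := by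
    filter_upwards [hlam] with x hx
    rw [Measure.lintegral_bind (measurable_kendallKernel_left α x).aemeasurable hψ.aemeasurable,
      lintegral_congr_ae (hν.mono fun y hy => lintegral_kendallKernel_williamsonPsi hα ht hx hy),
      lintegral_const_mul _ hψ]
  rw [kendallConv, Measure.lintegral_bind
      (Measure.measurable_bind_of_uncurry (measurable_kendallKernel α) ν).aemeasurable
      hψ.aemeasurable, lintegral_congr_ae hinner, lintegral_mul_const _ hψ]

lemma ae_nonneg_kendallPow (n : ℕ) : ∀ᵐ z ∂kendallPow α ν n, 0 ≤ z := by
  induction n with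
  | zero => exact (ae_dirac_iff measurableSet_Ici).2 le_rfl
  | succ n ih => exact ae_nonneg_kendallConv ih

lemma lintegral_kendallPow_williamsonPsi {t : ℝ} (hα : 0 < α) (ht : 0 ≤ t)
    (hν : ∀ᵐ y ∂ν, 0 ≤ y) (n : ℕ) :
    ∫⁻ s, ENNReal.ofReal (williamsonPsi α (t * s)) ∂kendallPow α ν n
      = (∫⁻ s, ENNReal.ofReal (williamsonPsi α (t * s)) ∂ν) ^ n := by
  induction n with
  | zero => simp [kendallPow, williamsonPsi_zero hα]
  | succ n ih =>
    rw [kendallPow, lintegral_kendallConv_williamsonPsi hα ht (ae_nonneg_kendallPow n) hν, ih,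
      pow_succ]

end KendallConv

lemma williamson_eq_toReal_lintegral (α : ℝ) (μ : Measure ℝ) (t : ℝ) :
    williamson α μ t = (∫⁻ s, ENNReal.ofReal (williamsonPsi α (t * s)) ∂μ).toReal :=
  integral_eq_lintegral_of_nonneg_ae (ae_of_all _ fun s => williamsonPsi_nonneg α (t * s))
    (by fun_prop : Measurable fun s => williamsonPsi α (t * s)).aestronglyMeasurable

/-- For every probability measure `ν` on `[0,∞)`, every `α > 0`, every `n : ℕ` and
`t ≥ 0`, the Kendall–Williamson transform of the `n`-fold Kendall convolution power
of `ν` satisfies `Φ_{ν^{△_α n}}(t) = (Φ_ν(t))^n`. -/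
theorem williamson_kendallPow
    (ν : Measure ℝ) [IsProbabilityMeasure ν] (hν : ν (Set.Iio 0) = 0)
    (α : ℝ) (hα : 0 < α) (n : ℕ) (t : ℝ) (ht : 0 ≤ t) :
    williamson α (kendallPow α ν n) t = (williamson α ν t) ^ n := by
  have hν_nonneg : ∀ᵐ y ∂ν, 0 ≤ y :=
    (measure_eq_zero_iff_ae_notMem.1 hν).mono fun y hy => not_lt.1 hy
  rw [williamson_eq_toReal_lintegral, williamson_eq_toReal_lintegral,
    lintegral_kendallPow_williamsonPsi hα ht hν_nonneg, ENNReal.toReal_pow]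
end

section
/- Let α > 0, n ≥ 1 an integer, and ν a probability measure on (0,∞). Let X, D, θ, Q be random variables on a probability space (Ω, ℙ) such that: X has distribution ν^{△_α n}; D has distribution ν; X and D are independent; θ has the Pareto distribution π_{2α} and is independent of the triple (X, D, Q); Q takes values in {0,1}; and ℙ({Q = 1} ∩ {(X,D) ∈ B}) = ∫_B z(x,y)^α d(law(X,D))(x,y) for every Borel set B ⊆ (0,∞)², where z(x,y) = min(x,y)/max(x,y). Then the random variable max(X, D) · θ^Q has distribution ν^{△_α (n+1)}. -/
open MeasureTheory Set

/-! Conditionally on `(X, D) = (x, y)`, the factor `θ ^ Q` is `1` with probability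
`1 - (min x y / max x y) ^ α` and an independent Pareto variable otherwise, so the conditional law
of `max X D * θ ^ Q` is the Kendall kernel `ρ_{x,y}`; integrating it against the law
`ν^{△n} ⊗ ν` of `(X, D)` gives `ν^{△(n+1)}`. Because `ν^{△n}` (for `n ≥ 1`) and `ν` live on
`(0, ∞)`, the hypothesis on `Q`, stated for Borel subsets of `(0, ∞)²`, holds for all Borel sets. -/

open scoped ENNReal

/-- The law of `c * θ ^ Q` for `θ ∼ π` and an independent `Q` with `P(Q = 0) = p`,
`P(Q = 1) = q`. -/
noncomputable def scaleMixture (π : Measure ℝ) (c : ℝ) (p q : ℝ≥0∞) : Measure ℝ :=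
  p • Measure.dirac c + q • Measure.map (fun x => c * x) π

section ScaleMixture

variable {π : Measure ℝ}

lemma measurable_map_const_mul [SFinite π] : Measurable fun c : ℝ => π.map (fun x => c * x) := by
  have h : (fun c : ℝ => π.map (fun x => c * x))
      = fun c => (π.map (Prod.mk c)).map (fun z : ℝ × ℝ => z.1 * z.2) := by
    funext c
    rw [Measure.map_map (by fun_prop) measurable_prodMk_left]
    rfl
  rw [h]
  exact (Measure.measurable_map _ (by fun_prop)).comp Measurable.map_prodMk_left

lemma Measurable.scaleMixture {β : Type*} [MeasurableSpace β] [SFinite π] {c : β → ℝ}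
    {p q : β → ℝ≥0∞} (hc : Measurable c) (hp : Measurable p) (hq : Measurable q) :
    Measurable fun b => scaleMixture π (c b) (p b) (q b) := by
  refine Measure.measurable_of_measurable_coe _ fun s hs => ?_
  simp only [_root_.scaleMixture, Measure.add_apply, Measure.smul_apply, smul_eq_mul]
  exact (hp.mul ((Measure.measurable_coe hs).comp (Measure.measurable_dirac.comp hc))).add
    (hq.mul ((Measure.measurable_coe hs).comp (measurable_map_const_mul.comp hc)))

lemma scaleMixture_Iic_eq_zero {c : ℝ} (hc : 0 < c) (hπ : π (Iic 0) = 0) (p q : ℝ≥0∞) :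
    scaleMixture π c p q (Iic 0) = 0 := by
  simp [scaleMixture, Measure.map_apply (measurable_const_mul c) measurableSet_Iic,
    preimage_const_mul_Iic₀ 0 hc, hπ, not_le.2 hc]

lemma bind_scaleMixture {β : Type*} [MeasurableSpace β] [SFinite π] {μ : Measure β}
    {M : β → ℝ} {p q : β → ℝ≥0∞} (hM : Measurable M) (hp : Measurable p) (hq : Measurable q) :
    μ.bind (fun b => scaleMixture π (M b) (p b) (q b))
      = (μ.withDensity p).map M + ((μ.withDensity q).prod π).map (fun z => M z.1 * z.2) := by
  ext s hs
  have hg : Measurable fun z : β × ℝ => M z.1 * z.2 := by fun_prop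
  rw [Measure.bind_apply hs (hM.scaleMixture hp hq).aemeasurable, Measure.add_apply,
    Measure.map_apply hM hs, Measure.map_apply hg hs, withDensity_apply _ (hM hs),
    Measure.prod_apply (hg hs),
    lintegral_withDensity_eq_lintegral_mul _ hq (measurable_measure_prodMk_left (hg hs)),
    ← lintegral_indicator (hM hs), ← lintegral_add_left (hp.indicator (hM hs))]
  refine lintegral_congr fun b => ?_
  by_cases h : M b ∈ s <;>
    simp [scaleMixture, Measure.map_apply (measurable_const_mul _) hs, h] <;> rfl

end ScaleMixture

section Kendall

variable {α : ℝ}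

instance : SFinite (pareto α) := Measure.withDensity.instSFinite

lemma pareto_Iic_eq_zero : pareto α (Iic 0) = 0 := by
  rw [pareto, withDensity_apply _ measurableSet_Iic]
  refine (setLIntegral_congr_fun measurableSet_Iic fun x hx => ?_).trans lintegral_zero
  simp [not_lt.2 ((mem_Iic.1 hx).trans zero_le_one)]

lemma kendallKernelLe_of_ne_zero {a b : ℝ} (hb : b ≠ 0) :
    kendallKernelLe α a b
      = scaleMixture (pareto α) b (ENNReal.ofReal (1 - (a / b) ^ α))
          (ENNReal.ofReal ((a / b) ^ α)) :=
  if_neg hb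

lemma kendallKernelLe_eq_scaleMixture {a b : ℝ} (ha : 0 ≤ a) (hb : 0 < b) :
    kendallKernelLe α a b
      = scaleMixture (pareto α) b (1 - ENNReal.ofReal ((a / b) ^ α))
          (ENNReal.ofReal ((a / b) ^ α)) := by
  rw [kendallKernelLe_of_ne_zero hb.ne', ENNReal.ofReal_sub _ (by positivity), ENNReal.ofReal_one]

lemma min_div_max_rpow_le_one {x y : ℝ} (hx : 0 ≤ x) (hy : 0 ≤ y) (hα : 0 ≤ α) :
    (min x y / max x y) ^ α ≤ 1 :=
  Real.rpow_le_one (div_nonneg (le_min hx hy) (hx.trans (le_max_left _ _)))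
    (div_le_one_of_le₀ min_le_max (hx.trans (le_max_left _ _))) hα

lemma measurable_kendallKernel_s9 (α : ℝ) :
    Measurable fun p : ℝ × ℝ => kendallKernel α p.1 p.2 := by
  have hmax : Measurable fun p : ℝ × ℝ => max p.1 p.2 := by fun_prop
  have hr : Measurable fun p : ℝ × ℝ => (min p.1 p.2 / max p.1 p.2) ^ α := by fun_prop
  exact Measurable.ite (hmax (measurableSet_singleton 0)) measurable_const
    (hmax.scaleMixture (measurable_const.sub hr).ennreal_ofReal hr.ennreal_ofReal)

lemma kendallConv_eq_bind_prod (α : ℝ) (μ ν : Measure ℝ) [SFinite ν] :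
    kendallConv α μ ν = (μ.prod ν).bind fun p => kendallKernel α p.1 p.2 := by
  have hκ := measurable_kendallKernel_s9 α
  ext s hs
  rw [kendallConv, Measure.bind_apply hs, Measure.bind_apply hs hκ.aemeasurable,
    lintegral_prod (fun p => kendallKernel α p.1 p.2 s)
      ((Measure.measurable_coe hs).comp hκ).aemeasurable]
  · exact lintegral_congr fun x =>
      Measure.bind_apply hs (hκ.comp measurable_prodMk_left).aemeasurable
  · refine (Measure.measurable_of_measurable_coe _ fun t ht => ?_).aemeasurable
    have h x : ν.bind (fun y => kendallKernel α x y) t = ∫⁻ y, kendallKernel α x y t ∂ν :=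
      Measure.bind_apply ht (hκ.comp measurable_prodMk_left).aemeasurable
    simp_rw [h]
    exact ((Measure.measurable_coe ht).comp hκ).lintegral_prod_right'

lemma kendallKernel_Iic_eq_zero {x y : ℝ} (h : 0 < max x y) :
    kendallKernel α x y (Iic 0) = 0 := by
  rw [kendallKernel, kendallKernelLe_of_ne_zero h.ne']
  exact scaleMixture_Iic_eq_zero h pareto_Iic_eq_zero _ _

lemma kendallConv_Iic_eq_zero (μ : Measure ℝ) {ν : Measure ℝ} [SFinite ν] (hν : ν (Iic 0) = 0) :
    kendallConv α μ ν (Iic 0) = 0 := by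
  have hκ := measurable_kendallKernel_s9 α
  have hpos : ∀ᵐ y ∂ν, 0 < y :=
    (measure_eq_zero_iff_ae_notMem.1 hν).mono fun y hy => not_le.1 hy
  have hx : ∀ x, ∫⁻ y, kendallKernel α x y (Iic 0) ∂ν = 0 := fun x =>
    (lintegral_congr_ae (hpos.mono fun y hy =>
      kendallKernel_Iic_eq_zero (hy.trans_le (le_max_right x y)))).trans lintegral_zero
  rw [kendallConv_eq_bind_prod, Measure.bind_apply measurableSet_Iic hκ.aemeasurable,
    lintegral_prod (fun p => kendallKernel α p.1 p.2 (Iic 0))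
      ((Measure.measurable_coe measurableSet_Iic).comp hκ).aemeasurable]
  simp only [hx, lintegral_zero]

end Kendall

section RandomScaling

open ProbabilityTheory

variable {Ω β : Type*} [MeasurableSpace Ω] [MeasurableSpace β] {μ : Measure Ω} {V : Ω → β}
  {E : Set Ω} {w : β → ℝ≥0∞}

lemma measure_inter_preimage_eq_setLIntegral_of_ae_mem {T : Set β} (hV : Measurable V)
    (hT : MeasurableSet T) (hVT : ∀ᵐ b ∂μ.map V, b ∈ T)
    (h : ∀ C, MeasurableSet C → C ⊆ T → μ (E ∩ V ⁻¹' C) = ∫⁻ b in C, w b ∂μ.map V)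
    {C : Set β} (hC : MeasurableSet C) :
    μ (E ∩ V ⁻¹' C) = ∫⁻ b in C, w b ∂μ.map V := by
  have hCT : (C ∩ T : Set β) =ᵐ[μ.map V] C := by
    filter_upwards [hVT] with b hb
    exact propext (and_iff_left hb)
  have hE : (E ∩ V ⁻¹' (C ∩ T) : Set Ω) =ᵐ[μ] (E ∩ V ⁻¹' C : Set Ω) := by
    filter_upwards [ae_of_ae_map hV.aemeasurable hVT] with ω hω
    exact propext (and_congr_right' (and_iff_left hω))
  rw [← measure_congr hE, h _ (hC.inter hT) inter_subset_right, setLIntegral_congr hCT]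

lemma map_restrict_eq_withDensity (hV : Measurable V)
    (h : ∀ C, MeasurableSet C → μ (E ∩ V ⁻¹' C) = ∫⁻ b in C, w b ∂μ.map V) :
    (μ.restrict E).map V = (μ.map V).withDensity w := by
  ext C hC
  rw [Measure.map_apply hV hC, Measure.restrict_apply (hV hC), inter_comm, h C hC,
    withDensity_apply _ hC]

lemma map_restrict_compl_eq_withDensity [IsFiniteMeasure μ] (hV : Measurable V)
    (hE : MeasurableSet E) (hw : Measurable w) (hw1 : ∀ᵐ b ∂μ.map V, w b ≤ 1)
    (h : ∀ C, MeasurableSet C → μ (E ∩ V ⁻¹' C) = ∫⁻ b in C, w b ∂μ.map V) :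
    (μ.restrict Eᶜ).map V = (μ.map V).withDensity fun b => 1 - w b := by
  ext C hC
  rw [Measure.map_apply hV hC, Measure.restrict_apply (hV hC), withDensity_apply _ hC,
    lintegral_sub hw (h C hC ▸ measure_ne_top _ _) (ae_restrict_of_ae hw1), setLIntegral_one,
    ← h C hC, Measure.map_apply hV hC, ← sdiff_eq, inter_comm E]
  exact ENNReal.eq_sub_of_add_eq (measure_ne_top _ _)
    ((add_comm _ _).trans (measure_inter_add_sdiff _ hE))

lemma map_prodMk_restrict_preimage_eq_prod [IsFiniteMeasure μ] {γ δ : Type*} [MeasurableSpace γ]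
    [MeasurableSpace δ] {Q : Ω → γ} {θ : Ω → δ} (hV : Measurable V)
    (hθ : Measurable θ) (hind : IndepFun θ (fun ω => (V ω, Q ω)) μ) {F : Set γ}
    (hF : MeasurableSet F) :
    (μ.restrict (Q ⁻¹' F)).map (fun ω => (V ω, θ ω))
      = ((μ.restrict (Q ⁻¹' F)).map V).prod (μ.map θ) := by
  refine (Measure.prod_eq fun A B hA hB => ?_).symm
  have hpre : (fun ω => (V ω, θ ω)) ⁻¹' (A ×ˢ B) ∩ Q ⁻¹' F
      = θ ⁻¹' B ∩ (fun ω => (V ω, Q ω)) ⁻¹' (A ×ˢ F) := by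
    ext ω
    simp only [mem_inter_iff, mem_preimage, mem_prod]
    tauto
  rw [Measure.map_apply (hV.prodMk hθ) (hA.prod hB),
    Measure.restrict_apply (hV.prodMk hθ (hA.prod hB)), hpre,
    hind.measure_inter_preimage_eq_mul _ _ hB (hA.prod hF), Measure.map_apply hV hA,
    Measure.restrict_apply (hV hA), Measure.map_apply hθ hB, mul_comm]
  rfl

theorem map_mul_rpow_eq_bind_scaleMixture [IsFiniteMeasure μ] {M : β → ℝ} {θ Q : Ω → ℝ}
    (hV : Measurable V) (hM : Measurable M) (hw : Measurable w) (hθ : Measurable θ)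
    (hQ : Measurable Q) (hQ01 : ∀ ω, Q ω = 0 ∨ Q ω = 1)
    (hind : IndepFun θ (fun ω => (V ω, Q ω)) μ) (hw1 : ∀ᵐ b ∂μ.map V, w b ≤ 1)
    (h : ∀ C, MeasurableSet C → μ ({ω | Q ω = 1} ∩ V ⁻¹' C) = ∫⁻ b in C, w b ∂μ.map V) :
    μ.map (fun ω => M (V ω) * θ ω ^ Q ω)
      = (μ.map V).bind fun b => scaleMixture (μ.map θ) (M b) (1 - w b) (w b) := by
  have hE : MeasurableSet {ω | Q ω = 1} := hQ (measurableSet_singleton 1)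
  have on_Q_ne_one : (μ.restrict {ω | Q ω = 1}ᶜ).map (fun ω => M (V ω) * θ ω ^ Q ω)
      = ((μ.restrict {ω | Q ω = 1}ᶜ).map V).map M := by
    rw [Measure.map_map hM hV]
    refine Measure.map_congr (ae_restrict_of_forall_mem hE.compl fun ω hω => ?_)
    simp [(hQ01 ω).resolve_right hω]
  have on_Q_eq_one : (μ.restrict {ω | Q ω = 1}).map (fun ω => M (V ω) * θ ω ^ Q ω)
      = ((μ.restrict {ω | Q ω = 1}).map fun ω => (V ω, θ ω)).map fun z => M z.1 * z.2 := by
    rw [Measure.map_map (by fun_prop) (hV.prodMk hθ)]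
    refine Measure.map_congr (ae_restrict_of_forall_mem hE fun ω hω => ?_)
    simp [show Q ω = 1 from hω]
  have hprod : (μ.restrict {ω | Q ω = 1}).map (fun ω => (V ω, θ ω))
      = ((μ.restrict {ω | Q ω = 1}).map V).prod (μ.map θ) :=
    map_prodMk_restrict_preimage_eq_prod hV hθ hind (measurableSet_singleton 1)
  have hmeas : Measurable fun ω => M (V ω) * θ ω ^ Q ω := by fun_prop
  rw [bind_scaleMixture (p := fun b => 1 - w b) hM (measurable_const.sub hw) hw,
    ← map_restrict_compl_eq_withDensity hV hE hw hw1 h, ← map_restrict_eq_withDensity hV h,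
    ← hprod, ← on_Q_ne_one, ← on_Q_eq_one, ← Measure.map_add _ _ hmeas,
    Measure.restrict_compl_add_restrict hE]

end RandomScaling

/-- One-step representation of the Kendall random walk with unit step distribution `ν` on
`(0,∞)`: if `X ∼ ν^{△_α n}` and `D ∼ ν` are independent, `θ ∼ π_{2α}` is independent of
`(X, D, Q)`, `Q` takes values in `{0,1}` and
`ℙ({Q = 1} ∩ {(X,D) ∈ B}) = ∫_B z(x,y)^α d(law (X,D))` for all Borel `B ⊆ (0,∞)²`, where
`z(x,y) = min(x,y)/max(x,y)`, then `max(X,D) · θ^Q` has distribution `ν^{△_α (n+1)}`. -/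
theorem kendall_walk_step
    {Ω : Type*} [MeasurableSpace Ω] (ℙ : Measure Ω) [IsProbabilityMeasure ℙ]
    (α : ℝ) (hα : 0 < α) (n : ℕ) (hn : 1 ≤ n)
    (ν : Measure ℝ) [IsProbabilityMeasure ν] (hν : ν (Set.Iic 0) = 0)
    (X D θ Q : Ω → ℝ) (hX : Measurable X) (hD : Measurable D) (hθ : Measurable θ)
    (hQ : Measurable Q)
    (hXlaw : Measure.map X ℙ = kendallPow α ν n)
    (hDlaw : Measure.map D ℙ = ν)
    (hXD : ProbabilityTheory.IndepFun X D ℙ)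
    (hθlaw : Measure.map θ ℙ = pareto α)
    (hindep : ProbabilityTheory.IndepFun θ (fun ω => (X ω, D ω, Q ω)) ℙ)
    (hQ01 : ∀ ω, Q ω = 0 ∨ Q ω = 1)
    (hQ1 : ∀ B : Set (ℝ × ℝ), MeasurableSet B → B ⊆ Set.Ioi 0 ×ˢ Set.Ioi 0 →
      ℙ ({ω | Q ω = 1} ∩ (fun ω => (X ω, D ω)) ⁻¹' B)
        = ∫⁻ p in B, ENNReal.ofReal ((min p.1 p.2 / max p.1 p.2) ^ α)
            ∂(Measure.map (fun ω => (X ω, D ω)) ℙ)) :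
    Measure.map (fun ω => max (X ω) (D ω) * θ ω ^ Q ω) ℙ = kendallPow α ν (n + 1) := by
  obtain ⟨m, rfl⟩ := Nat.exists_eq_add_of_le' hn
  have hlaw : ℙ.map (fun ω => (X ω, D ω)) = (kendallPow α ν (m + 1)).prod ν := by
    rw [← hXlaw, ← hDlaw]
    exact (ProbabilityTheory.indepFun_iff_map_prod_eq_prod_map_map
      hX.aemeasurable hD.aemeasurable).1 hXD
  have hpos : ∀ᵐ p ∂ℙ.map (fun ω => (X ω, D ω)), p ∈ Ioi 0 ×ˢ Ioi 0 := by
    have hX0 : kendallPow α ν (m + 1) (Iic 0) = 0 := kendallConv_Iic_eq_zero _ hν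
    rw [hlaw]
    filter_upwards [Measure.quasiMeasurePreserving_fst.ae (measure_eq_zero_iff_ae_notMem.1 hX0),
      Measure.quasiMeasurePreserving_snd.ae (measure_eq_zero_iff_ae_notMem.1 hν)] with p hp1 hp2
    exact mem_prod.2 ⟨mem_Ioi.2 (not_le.1 hp1), mem_Ioi.2 (not_le.1 hp2)⟩
  have hw1 : ∀ᵐ p ∂ℙ.map (fun ω => (X ω, D ω)),
      ENNReal.ofReal ((min p.1 p.2 / max p.1 p.2) ^ α) ≤ 1 :=
    hpos.mono fun p hp => ENNReal.ofReal_le_one.2 (min_div_max_rpow_le_one hp.1.le hp.2.le hα.le)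
  have hind : ProbabilityTheory.IndepFun θ (fun ω => ((X ω, D ω), Q ω)) ℙ :=
    hindep.comp (φ := id) (ψ := fun t : ℝ × ℝ × ℝ => ((t.1, t.2.1), t.2.2)) measurable_id
      (by fun_prop)
  refine (map_mul_rpow_eq_bind_scaleMixture (M := fun p : ℝ × ℝ => max p.1 p.2) (hX.prodMk hD)
    (by fun_prop) (by fun_prop) hθ hQ hQ01 hind hw1 fun C hC =>
      measure_inter_preimage_eq_setLIntegral_of_ae_mem (hX.prodMk hD)
        (measurableSet_Ioi.prod measurableSet_Ioi) hpos hQ1 hC).trans ?_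
  rw [hθlaw, kendallPow, kendallConv_eq_bind_prod, ← hlaw]
  exact Measure.bind_congr_right (hpos.mono fun p hp => (kendallKernelLe_eq_scaleMixture
    (le_min hp.1.le hp.2.le) (hp.1.trans_le (le_max_left _ _))).symm)
end
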